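/- (Hardness of approximate gradient descent.) Let $\mathcal{A}$ be a finite distribution family, $\{h_w : w \in \mathbb{R}^N\}$ a differentiable parametric class, and consider $\Delta$-approximate gradient descent on the hinge loss: $w_t = w_{t-1} - \eta v_{t-1}$ where $v_t \in \Delta\mathbb{Z}^N$ satisfies $\|v_t - \nabla_w L_{f(\mathcal{D})}(h_{w_{t-1}})\|_\infty \le \Delta/2$. Suppose the (deterministic) initialization $w_0$ satisfies $|h_{w_0}(x)| \le 1$ and $\|\nabla_w h_{w_0}(x)\|_2 \le B$ for all $x$, and $\Delta \ge 4\sqrt{2 B^2 N \mathrm{Var}(\mathcal{A})}$. Then for at least a $3/4$ fraction of pairs $(f,\mathcal{D}) \in \mathcal{A}$: the algorithm's update at step 1 is $v_0 = 0$ (so it outputs $h_{w_0}$), and $L_{f(\mathcal{D})}(h_{w_0}) \ge 1 - \sqrt{8\,\mathrm{Var}(\mathcal{A})}$. Consequently $\mathbb{E}_{(f,\mathcal{D}) \sim \mathcal{A}}[L_{f(\mathcal{D})}(h_{w_T})] \ge \frac{3}{4}(1 - \sqrt{8\,\mathrm{Var}(\mathcal{A})})$. -/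

import Mathlib

/-!
Write `⟨f, φ⟩_D` for `E_{x ~ D}[f(x) φ(x)]`. By the definition of `Var(A)`, every `φ` with
`|φ| ≤ 1` satisfies `Σ_{(f,D)} ⟨f, φ⟩_D² ≤ |A| Var(A)`. Taking `φ = ∂ᵢh_{w₀} / B` for each of
the `N` coordinates bounds the average squared gradient norm of the hinge loss at `w₀` by
`B² N Var(A) ≤ Δ²/32`; by Markov, for `7/8` of the pairs the gradient is `< Δ/2` in every
coordinate, and then `0` is the only point of `Δℤᴺ` within `Δ/2` of it. Taking `φ = h_{w₀}`,
Markov also gives `|⟨f, h_{w₀}⟩_D| ≤ √(8 Var(A))` for `7/8` of the pairs, and the hinge loss is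
at least `1 - ⟨f, h_{w₀}⟩_D`. A union bound leaves `3/4` of the pairs; averaging the
nonnegative losses gives the bound on the expectation.
-/

open Finset

/-- The "variance" of a finite family of labeled distributions. -/
noncomputable def famVar {X ι : Type} [Fintype X] [Fintype ι]
    (F D : ι → X → ℝ) : ℝ :=
  sSup {v : ℝ | ∃ φ : X → ℝ, (∀ x, |φ x| ≤ 1) ∧
    v = (Fintype.card ι : ℝ)⁻¹ * ∑ a, (∑ x, D a x * (F a x * φ x)) ^ 2}

section HingeLoss

variable {X ι κ : Type} [Fintype X]

def correlation (F D : ι → X → ℝ) (a : ι) (φ : X → ℝ) : ℝ :=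
  ∑ x, D a x * (F a x * φ x)

def hingeLoss (F D : ι → X → ℝ) (a : ι) (φ : X → ℝ) : ℝ :=
  ∑ x, D a x * max (1 - φ x * F a x) 0

-- Since `|h_{w₀}| ≤ 1`, the hinge `max (1 - h f) 0` is on its linear branch at `w₀`, so the
-- gradient of the loss there is `-⟨f, ∂ᵢh_{w₀}⟩_D`.
def hingeGrad (F D : ι → X → ℝ) (g : X → κ → ℝ) (a : ι) : κ → ℝ :=
  fun i => -correlation F D a (fun x => g x i)

def RoundsOnlyToZero (Δ : ℝ) (c : κ → ℝ) : Prop :=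
  ∀ v : κ → ℝ, (∀ i, ∃ m : ℤ, v i = Δ * m) → (∀ i, |v i - c i| ≤ Δ / 2) → v = 0

variable {F D : ι → X → ℝ}

lemma abs_correlation_le_one (hD0 : ∀ a x, 0 ≤ D a x) (hD1 : ∀ a, ∑ x, D a x = 1)
    (hF : ∀ a x, |F a x| ≤ 1) {φ : X → ℝ} (hφ : ∀ x, |φ x| ≤ 1) (a : ι) :
    |correlation F D a φ| ≤ 1 := by
  calc |correlation F D a φ| ≤ ∑ x, |D a x * (F a x * φ x)| := abs_sum_le_sum_abs _ _
    _ ≤ ∑ x, D a x := by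
        refine sum_le_sum fun x _ => ?_
        rw [abs_mul, abs_mul, abs_of_nonneg (hD0 a x)]
        exact mul_le_of_le_one_right (hD0 a x)
          (mul_le_one₀ (hF a x) (abs_nonneg _) (hφ x))
    _ = 1 := hD1 a

lemma one_sub_correlation_le_hingeLoss (hD0 : ∀ a x, 0 ≤ D a x)
    (hD1 : ∀ a, ∑ x, D a x = 1) (a : ι) (φ : X → ℝ) :
    1 - correlation F D a φ ≤ hingeLoss F D a φ := by
  calc 1 - correlation F D a φ = ∑ x, D a x * (1 - φ x * F a x) := by
        simp only [correlation, mul_sub, mul_one, sum_sub_distrib, hD1]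
        congr 1
        exact sum_congr rfl fun x _ => by ring
    _ ≤ hingeLoss F D a φ :=
        sum_le_sum fun x _ => mul_le_mul_of_nonneg_left (le_max_left _ _) (hD0 a x)

lemma hingeLoss_nonneg (hD0 : ∀ a x, 0 ≤ D a x) (a : ι) (φ : X → ℝ) :
    0 ≤ hingeLoss F D a φ :=
  sum_nonneg fun x _ => mul_nonneg (hD0 a x) (le_max_right _ _)

lemma eq_zero_of_abs_sub_le_of_abs_lt {Δ v c : ℝ} {m : ℤ} (hv : v = Δ * m)
    (hvc : |v - c| ≤ Δ / 2) (hc : |c| < Δ / 2) : v = 0 := by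
  have hΔ : 0 < Δ := by linarith [abs_nonneg c]
  have hv_lt : |v| < Δ := by
    calc |v| = |(v - c) + c| := by rw [sub_add_cancel]
      _ ≤ |v - c| + |c| := abs_add_le _ _
      _ < Δ := by linarith
  have hm : |(m : ℝ)| < 1 := by
    rw [hv, abs_mul, abs_of_pos hΔ] at hv_lt
    exact (mul_lt_iff_lt_one_right hΔ).1 hv_lt
  have hm0 : m = 0 := Int.abs_lt_one_iff.1 (by exact_mod_cast hm)
  rw [hv, hm0, Int.cast_zero, mul_zero]

lemma roundsOnlyToZero_of_sum_sq_lt [Fintype κ] {Δ : ℝ} {c : κ → ℝ}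
    (hc : ∑ i, c i ^ 2 < Δ ^ 2 / 4) :
    RoundsOnlyToZero Δ c := by
  intro v hvΔ hvc
  funext i
  obtain ⟨m, hm⟩ := hvΔ i
  have hci : c i ^ 2 < (Δ / 2) ^ 2 := by
    calc c i ^ 2 ≤ ∑ j, c j ^ 2 := single_le_sum (fun j _ => sq_nonneg (c j)) (mem_univ i)
      _ < (Δ / 2) ^ 2 := by linarith
  exact eq_zero_of_abs_sub_le_of_abs_lt hm (hvc i)
    (abs_lt_of_sq_lt_sq hci (by linarith [abs_nonneg (v i - c i), hvc i]))

lemma roundsOnlyToZero_zero {c : κ → ℝ} : RoundsOnlyToZero 0 c := by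
  intro v hv _
  funext i
  obtain ⟨m, hm⟩ := hv i
  rw [hm, zero_mul, Pi.zero_apply]

variable [Fintype ι]

lemma famVar_nonneg : 0 ≤ famVar F D :=
  Real.sSup_nonneg <| by
    rintro v ⟨φ, -, rfl⟩
    positivity

lemma sum_correlation_sq_le_card_mul_famVar [Nonempty ι] (hD0 : ∀ a x, 0 ≤ D a x)
    (hD1 : ∀ a, ∑ x, D a x = 1) (hF : ∀ a x, |F a x| ≤ 1) {φ : X → ℝ}
    (hφ : ∀ x, |φ x| ≤ 1) :
    ∑ a, correlation F D a φ ^ 2 ≤ Fintype.card ι * famVar F D := by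
  have hcard : (0 : ℝ) < Fintype.card ι := by exact_mod_cast Fintype.card_pos
  have hsq_le_one (ψ : X → ℝ) (hψ : ∀ x, |ψ x| ≤ 1) (a : ι) :
      correlation F D a ψ ^ 2 ≤ 1 :=
    (sq_le_one_iff_abs_le_one _).2 (abs_correlation_le_one hD0 hD1 hF hψ a)
  have hbdd : BddAbove {v : ℝ | ∃ ψ : X → ℝ, (∀ x, |ψ x| ≤ 1) ∧
      v = (Fintype.card ι : ℝ)⁻¹ * ∑ a, correlation F D a ψ ^ 2} := by
    refine ⟨1, ?_⟩
    rintro v ⟨ψ, hψ, rfl⟩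
    rw [inv_mul_le_iff₀ hcard, mul_one]
    simpa using sum_le_sum fun a (_ : a ∈ univ) => hsq_le_one ψ hψ a
  exact (inv_mul_le_iff₀ hcard).1 (le_csSup hbdd ⟨φ, hφ, rfl⟩)

lemma sum_correlation_sq_le_of_abs_le [Nonempty ι] (hD0 : ∀ a x, 0 ≤ D a x)
    (hD1 : ∀ a, ∑ x, D a x = 1) (hF : ∀ a x, |F a x| ≤ 1) {φ : X → ℝ} {M : ℝ}
    (hφ : ∀ x, |φ x| ≤ M) :
    ∑ a, correlation F D a φ ^ 2 ≤ M ^ 2 * (Fintype.card ι * famVar F D) := by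
  rcases le_or_gt M 0 with hM | hM
  · have hφ0 : φ = 0 := funext fun x => abs_nonpos_iff.1 ((hφ x).trans hM)
    have hV : 0 ≤ famVar F D := famVar_nonneg
    calc ∑ a, correlation F D a φ ^ 2 = 0 := by simp [correlation, hφ0]
      _ ≤ _ := by positivity
  · have hscaled : ∀ x, |M⁻¹ * φ x| ≤ 1 := fun x => by
      rw [abs_mul, abs_inv, abs_of_pos hM, inv_mul_le_one₀ hM]
      exact hφ x
    have key := sum_correlation_sq_le_card_mul_famVar hD0 hD1 hF hscaled
    have hcorr (a : ι) :
        correlation F D a (fun x => M⁻¹ * φ x) = M⁻¹ * correlation F D a φ := by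
      simp only [correlation, mul_sum]
      exact sum_congr rfl fun x _ => by ring
    simp only [hcorr, mul_pow, ← mul_sum, inv_pow] at key
    rwa [inv_mul_le_iff₀ (by positivity)] at key

lemma sum_sum_hingeGrad_sq_le [Fintype κ] [Nonempty ι] (hD0 : ∀ a x, 0 ≤ D a x)
    (hD1 : ∀ a, ∑ x, D a x = 1) (hF : ∀ a x, |F a x| ≤ 1) {g : X → κ → ℝ} {B : ℝ}
    (hg : ∀ x i, |g x i| ≤ B) :
    ∑ a, ∑ i, hingeGrad F D g a i ^ 2 ≤
      Fintype.card ι * (B ^ 2 * Fintype.card κ * famVar F D) := by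
  calc ∑ a, ∑ i, hingeGrad F D g a i ^ 2
        = ∑ i, ∑ a, correlation F D a (fun x => g x i) ^ 2 := by
        rw [sum_comm]
        simp only [hingeGrad, neg_sq]
    _ ≤ ∑ _i : κ, B ^ 2 * (Fintype.card ι * famVar F D) :=
        sum_le_sum fun i _ => sum_correlation_sq_le_of_abs_le hD0 hD1 hF fun x => hg x i
    _ = _ := by rw [sum_const, card_univ, nsmul_eq_mul]; ring

lemma mul_ncard_setOf_le_le_sum {q : ι → ℝ} (hq : ∀ a, 0 ≤ q a) (t : ℝ) :
    t * {a | t ≤ q a}.ncard ≤ ∑ a, q a := by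
  classical
  rw [Set.ncard_eq_toFinset_card', Set.toFinset_ofPred, mul_comm, ← nsmul_eq_mul]
  calc #(univ.filter fun a => t ≤ q a) • t ≤ ∑ a ∈ univ.filter fun a => t ≤ q a, q a :=
        card_nsmul_le_sum _ _ _ fun a ha => (mem_filter.1 ha).2
    _ ≤ ∑ a, q a := sum_le_sum_of_subset_of_nonneg (subset_univ _) fun a _ _ => hq a

lemma eight_mul_ncard_not_roundsOnlyToZero_le [Fintype κ] {Δ : ℝ} (hΔ : 0 ≤ Δ)
    {c : ι → κ → ℝ} (hc : 32 * ∑ a, ∑ i, c a i ^ 2 ≤ Fintype.card ι * Δ ^ 2) :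
    8 * ({a | ¬RoundsOnlyToZero Δ (c a)}.ncard : ℝ) ≤ Fintype.card ι := by
  rcases hΔ.eq_or_lt with rfl | hΔpos
  · simp [roundsOnlyToZero_zero]
  have hsub : {a | ¬RoundsOnlyToZero Δ (c a)} ⊆ {a | Δ ^ 2 / 4 ≤ ∑ i, c a i ^ 2} :=
    fun a ha => not_lt.1 fun hlt => ha (roundsOnlyToZero_of_sum_sq_lt hlt)
  have hmarkov := mul_ncard_setOf_le_le_sum
    (fun a => sum_nonneg fun i (_ : i ∈ univ) => sq_nonneg (c a i)) (Δ ^ 2 / 4)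
  have hmono : ({a | ¬RoundsOnlyToZero Δ (c a)}.ncard : ℝ) ≤
      {a | Δ ^ 2 / 4 ≤ ∑ i, c a i ^ 2}.ncard := by
    exact_mod_cast Set.ncard_le_ncard hsub
  have hΔsq : 0 < Δ ^ 2 := by positivity
  nlinarith

lemma eight_mul_ncard_hingeLoss_lt_le [Nonempty ι] (hD0 : ∀ a x, 0 ≤ D a x)
    (hD1 : ∀ a, ∑ x, D a x = 1) (hF : ∀ a x, |F a x| ≤ 1) {φ : X → ℝ}
    (hφ : ∀ x, |φ x| ≤ 1) :
    8 * ({a | ¬hingeLoss F D a φ ≥ 1 - √(8 * famVar F D)}.ncard : ℝ) ≤ Fintype.card ι := by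
  set V := famVar F D
  have hsum : ∑ a, correlation F D a φ ^ 2 ≤ Fintype.card ι * V :=
    sum_correlation_sq_le_card_mul_famVar hD0 hD1 hF hφ
  have hgood (a : ι) (ha : correlation F D a φ ^ 2 ≤ 8 * V) :
      hingeLoss F D a φ ≥ 1 - √(8 * V) := by
    have := one_sub_correlation_le_hingeLoss (F := F) hD0 hD1 a φ
    linarith [le_abs_self (correlation F D a φ), Real.abs_le_sqrt ha]
  rcases (show 0 ≤ V from famVar_nonneg).eq_or_lt with hV | hV
  · have hall (a : ι) : correlation F D a φ ^ 2 ≤ 8 * V := by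
      calc correlation F D a φ ^ 2 ≤ ∑ b, correlation F D b φ ^ 2 :=
            single_le_sum (fun b _ => sq_nonneg (correlation F D b φ)) (mem_univ a)
        _ ≤ 8 * V := by rw [← hV] at hsum ⊢; linarith
    have hempty : {a | ¬hingeLoss F D a φ ≥ 1 - √(8 * V)} = ∅ :=
      Set.eq_empty_of_forall_notMem fun a ha => ha (hgood a (hall a))
    rw [hempty, Set.ncard_empty]
    simp
  have hsub : {a | ¬hingeLoss F D a φ ≥ 1 - √(8 * V)} ⊆
      {a | 8 * V ≤ correlation F D a φ ^ 2} :=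
    fun a ha => le_of_lt (not_le.1 fun hle => ha (hgood a hle))
  have hmarkov := mul_ncard_setOf_le_le_sum (fun a => sq_nonneg (correlation F D a φ)) (8 * V)
  have hmono : ({a | ¬hingeLoss F D a φ ≥ 1 - √(8 * V)}.ncard : ℝ) ≤
      {a | 8 * V ≤ correlation F D a φ ^ 2}.ncard := by
    exact_mod_cast Set.ncard_le_ncard hsub
  nlinarith

lemma three_quarters_card_le_ncard_and {P Q : ι → Prop}
    (hP : 8 * ({a | ¬P a}.ncard : ℝ) ≤ Fintype.card ι)
    (hQ : 8 * ({a | ¬Q a}.ncard : ℝ) ≤ Fintype.card ι) :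
    3 / 4 * (Fintype.card ι : ℝ) ≤ {a | P a ∧ Q a}.ncard := by
  have hsplit := Set.ncard_add_ncard_compl {a | P a ∧ Q a}
  have hcompl : {a | P a ∧ Q a}ᶜ ⊆ {a | ¬P a} ∪ {a | ¬Q a} := fun a ha => by
    simpa only [Set.mem_compl_iff, Set.mem_ofPred_eq, Set.mem_union, not_and_or] using ha
  have hunion := (Set.ncard_le_ncard hcompl).trans (Set.ncard_union_le _ _)
  rw [Nat.card_eq_fintype_card] at hsplit
  have hsplit' : ({a | P a ∧ Q a}.ncard : ℝ) + ({a | P a ∧ Q a}ᶜ.ncard : ℝ) =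
      Fintype.card ι := by exact_mod_cast hsplit
  have hunion' : ({a | P a ∧ Q a}ᶜ.ncard : ℝ) ≤ {a | ¬P a}.ncard + {a | ¬Q a}.ncard := by
    exact_mod_cast hunion
  linarith

lemma mul_le_inv_card_mul_sum [Nonempty ι] {ℓ : ι → ℝ} (hℓ : ∀ a, 0 ≤ ℓ a) {S : Set ι}
    {p L : ℝ} (hp : 0 ≤ p) (hS : ∀ a ∈ S, L ≤ ℓ a)
    (hcard : p * Fintype.card ι ≤ S.ncard) :
    p * L ≤ (Fintype.card ι : ℝ)⁻¹ * ∑ a, ℓ a := by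
  have hpos : (0 : ℝ) < Fintype.card ι := by exact_mod_cast Fintype.card_pos
  rw [le_inv_mul_iff₀ hpos]
  rcases le_or_gt L 0 with hL | hL
  · have := sum_nonneg fun a (_ : a ∈ univ) => hℓ a
    nlinarith [mul_nonneg hpos.le hp]
  have hmono : (S.ncard : ℝ) ≤ {a | L ≤ ℓ a}.ncard := by
    exact_mod_cast Set.ncard_le_ncard hS
  have hmarkov := mul_ncard_setOf_le_le_sum hℓ L
  nlinarith

end HingeLoss

theorem approx_gd_hardness_general {X ι : Type} [Fintype X] [Fintype ι] [Nonempty ι] {N : ℕ}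
    (F D : ι → X → ℝ)
    (hD0 : ∀ a x, 0 ≤ D a x) (hD1 : ∀ a, ∑ x, D a x = 1)
    (hF : ∀ a x, F a x = 1 ∨ F a x = -1)
    (h : (Fin N → ℝ) → X → ℝ)
    (w0 : Fin N → ℝ)
    (g : X → Fin N → ℝ)
    (hinit : ∀ x, |h w0 x| ≤ 1)
    (B : ℝ) (hB : ∀ x, Real.sqrt (∑ i, g x i ^ 2) ≤ B)
    (Δ : ℝ) (hΔ : Δ ≥ 4 * Real.sqrt (2 * B ^ 2 * N * famVar F D)) :
    let Good : Set ι := {a |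
      (∀ v : Fin N → ℝ, (∀ i, ∃ m : ℤ, v i = Δ * m) →
        (∀ i, |v i - (-(∑ x, D a x * (F a x * g x i)))| ≤ Δ / 2) → v = 0) ∧
      (∑ x, D a x * max (1 - h w0 x * F a x) 0 ≥ 1 - Real.sqrt (8 * famVar F D))}
    ((3 : ℝ) / 4 * Fintype.card ι ≤ Good.ncard) ∧
    (∀ wT : ι → Fin N → ℝ, (∀ a ∈ Good, wT a = w0) →
      (Fintype.card ι : ℝ)⁻¹ * ∑ a, ∑ x, D a x * max (1 - h (wT a) x * F a x) 0
        ≥ 3 / 4 * (1 - Real.sqrt (8 * famVar F D))) := by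
  intro Good
  have hF' (a : ι) (x : X) : |F a x| ≤ 1 := by rcases hF a x with hx | hx <;> simp [hx]
  have hg (x : X) (i : Fin N) : |g x i| ≤ B :=
    (Real.abs_le_sqrt (single_le_sum (fun j _ => sq_nonneg (g x j)) (mem_univ i))).trans (hB x)
  obtain ⟨hΔ0, hΔsq⟩ :=
    Real.sqrt_le_iff.1 (show √(2 * B ^ 2 * N * famVar F D) ≤ Δ / 4 by linarith)
  have hgrad : 32 * ∑ a, ∑ i, hingeGrad F D g a i ^ 2 ≤ Fintype.card ι * Δ ^ 2 := by
    have := sum_sum_hingeGrad_sq_le hD0 hD1 hF' hg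
    rw [Fintype.card_fin] at this
    nlinarith [(Nat.cast_nonneg (Fintype.card ι) : (0 : ℝ) ≤ _)]
  have hcount : 3 / 4 * (Fintype.card ι : ℝ) ≤ Good.ncard :=
    three_quarters_card_le_ncard_and
      (eight_mul_ncard_not_roundsOnlyToZero_le (by linarith) hgrad)
      (eight_mul_ncard_hingeLoss_lt_le hD0 hD1 hF' hinit)
  refine ⟨hcount, fun wT hwT => ?_⟩
  exact mul_le_inv_card_mul_sum (fun a => hingeLoss_nonneg hD0 a (h (wT a))) (by norm_num)
    (fun a ha => hwT a ha ▸ ha.2) hcount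

/-- hardness of Δ-approximate gradient descent with the hinge loss:
with initialization satisfying `|h_{w₀}(x)| ≤ 1`, gradient bound
`‖∇_w h_{w₀}(x)‖₂ ≤ B` (`g x i` is the partial derivative in coordinate `i` at `w₀`),
and `Δ ≥ 4√(2B²N·Var(A))`, for at least a `3/4` fraction of pairs `(f,D) ∈ A` every
valid rounded gradient `v₀ ∈ Δℤ^N` (within `Δ/2` in `ℓ∞` of
`∇_w L_{f(D)}(h_{w₀}) = -E_{x~D}[f(x)∇_w h_{w₀}(x)]`) is `0` — so the algorithm outputs
`h_{w₀}` — and `L_{f(D)}(h_{w₀}) ≥ 1 - √(8Var(A))`. Consequently, if the output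
parameters equal `w₀` on this good set, the expected loss over the family is at least
`(3/4)(1 - √(8Var(A)))`. -/
theorem approx_gd_hardness {X ι : Type} [Fintype X] [Fintype ι] [Nonempty ι] {N : ℕ}
    (F D : ι → X → ℝ)
    (hD0 : ∀ a x, 0 ≤ D a x) (hD1 : ∀ a, ∑ x, D a x = 1)
    (hF : ∀ a x, F a x = 1 ∨ F a x = -1)
    (h : (Fin N → ℝ) → X → ℝ)
    (w0 : Fin N → ℝ)
    (g : X → Fin N → ℝ)
    (hg : ∀ x i, HasDerivAt (fun s => h (Function.update w0 i s) x) (g x i) (w0 i))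
    (hinit : ∀ x, |h w0 x| ≤ 1)
    (B : ℝ) (hB : ∀ x, Real.sqrt (∑ i, g x i ^ 2) ≤ B)
    (Δ η : ℝ) (hΔ : Δ ≥ 4 * Real.sqrt (2 * B ^ 2 * N * famVar F D)) :
    let Good : Set ι := {a |
      (∀ v : Fin N → ℝ, (∀ i, ∃ m : ℤ, v i = Δ * m) →
        (∀ i, |v i - (-(∑ x, D a x * (F a x * g x i)))| ≤ Δ / 2) → v = 0) ∧
      (∑ x, D a x * max (1 - h w0 x * F a x) 0 ≥ 1 - Real.sqrt (8 * famVar F D))}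
    ((3 : ℝ) / 4 * Fintype.card ι ≤ Good.ncard) ∧
    (∀ wT : ι → Fin N → ℝ, (∀ a ∈ Good, wT a = w0) →
      (Fintype.card ι : ℝ)⁻¹ * ∑ a, ∑ x, D a x * max (1 - h (wT a) x * F a x) 0
        ≥ 3 / 4 * (1 - Real.sqrt (8 * famVar F D))) :=
  approx_gd_hardness_general F D hD0 hD1 hF h w0 g hinit B hB Δ hΔ
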